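/- For any partition μ of l and any set of vertical dominoes: A_β = n(μ*) + Σ_{(b,south(b)) ∈ V_β} arm(b), where β is any rearrangement of μ*, A_β is the number of attacking pairs of the tuple of ribbons ν(S) (independent of S), arm is taken in the column diagram of β, and n(μ*) = Σ_i (i−1)μ*_i. -/
import Mathlib
set_option maxRecDepth 8000

open Finset

/-- Position of the box of content `-j` in the `i`-th ribbon of `ν(S)`. -/
def posS (k : ℕ) (S : Finset (Fin k × ℕ)) (i : Fin k) : ℕ → ℤ × ℤ
  | 0 => (0, 1)
  | 1 => (0, 1)
  | (j + 2) =>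
      if (i, j + 2) ∈ S then
        ((posS k S i (j + 1)).1, (posS k S i (j + 1)).2 + 1)
      else
        ((posS k S i (j + 1)).1 - 1, (posS k S i (j + 1)).2)

/-- Adjusted content `c̃ = c + (i+1)·ε`. -/
def adjC (k : ℕ) (S : Finset (Fin k × ℕ)) (ε : ℚ) (c : Fin k × ℕ) : ℚ :=
  (((posS k S c.1 c.2).1 - (posS k S c.1 c.2).2 : ℤ) : ℚ) + ((c.1 : ℕ) + 1) * ε

/-- Number of attacking pairs of the tuple of ribbons `ν(S)`. -/
def attackCount (k : ℕ) (boxes S : Finset (Fin k × ℕ)) (ε : ℚ) : ℕ :=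
  ((boxes ×ˢ boxes).filter fun pq =>
    (adjC k S ε pq.1 < adjC k S ε pq.2 ∨
      (adjC k S ε pq.1 = adjC k S ε pq.2 ∧
        (posS k S pq.1.1 pq.1.2).1 < (posS k S pq.2.1 pq.2.2).1)) ∧
    0 < adjC k S ε pq.2 - adjC k S ε pq.1 ∧
    adjC k S ε pq.2 - adjC k S ε pq.1 < 1).card

/-- Arm of the box `(i,j)` (with `j ≥ 2`) in the column diagram of `β`. -/
def armCol (k : ℕ) (β : Fin k → ℕ) (i : Fin k) (j : ℕ) : ℕ :=
  (Finset.univ.filter fun i' : Fin k => i' < i ∧ j - 1 ≤ β i' ∧ β i' < β i).card +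
    (Finset.univ.filter fun i' : Fin k => i < i' ∧ j ≤ β i' ∧ β i' ≤ β i).card

/- ------------------- auxiliary lemmas ------------------- -/

lemma stmt15_pos_diff (k : ℕ) (S : Finset (Fin k × ℕ)) (i : Fin k) :
    ∀ j : ℕ, (posS k S i (j + 1)).1 - (posS k S i (j + 1)).2 = -(j + 1 : ℤ) := by
  intro j
  induction j with
  | zero => simp [posS]
  | succ n ih =>
      show (posS k S i (n + 2)).1 - (posS k S i (n + 2)).2 = _
      rw [posS]
      split <;> simp <;> omega

lemma stmt15_adjC_eq (k : ℕ) (S : Finset (Fin k × ℕ)) (ε : ℚ) (c : Fin k × ℕ)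
    (hc : 1 ≤ c.2) : adjC k S ε c = -(c.2 : ℚ) + ((c.1 : ℕ) + 1) * ε := by
  obtain ⟨j, hj⟩ := Nat.exists_eq_add_of_le hc
  unfold adjC
  rw [show c.2 = j + 1 by omega, stmt15_pos_diff]
  push_cast
  ring

lemma stmt15_key (k : ℕ) (a b : Fin k) (j j' : ℕ) (ε : ℚ) (hε0 : 0 < ε) (hε1 : ε < 1 / k) :
    (0 < ((j : ℚ) - j') + (((b : ℕ) : ℚ) - ((a : ℕ) : ℚ)) * ε ∧
      ((j : ℚ) - j') + (((b : ℕ) : ℚ) - ((a : ℕ) : ℚ)) * ε < 1) ↔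
    ((j = j' ∧ a < b) ∨ (j = j' + 1 ∧ b < a)) := by
  have hk : 0 < k := a.pos
  have hkq : (0 : ℚ) < k := by exact_mod_cast hk
  have hεk : ε * k < 1 := (lt_div_iff₀ hkq).mp hε1
  have hb1 : ((b : ℕ) : ℚ) ≤ (k : ℚ) - 1 := by
    have := b.isLt; have : ((b : ℕ) : ℚ) + 1 ≤ k := by exact_mod_cast this
    linarith
  have ha1 : ((a : ℕ) : ℚ) ≤ (k : ℚ) - 1 := by
    have := a.isLt; have : ((a : ℕ) : ℚ) + 1 ≤ k := by exact_mod_cast this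
    linarith
  have ha0 : (0 : ℚ) ≤ ((a : ℕ) : ℚ) := by positivity
  have hb0 : (0 : ℚ) ≤ ((b : ℕ) : ℚ) := by positivity
  have habs1 : (((b : ℕ) : ℚ) - ((a : ℕ) : ℚ)) * ε < 1 := by nlinarith
  have habs2 : -1 < (((b : ℕ) : ℚ) - ((a : ℕ) : ℚ)) * ε := by nlinarith
  constructor
  · rintro ⟨h1, h2⟩
    have hd1 : ((j' : ℚ)) < (j : ℚ) + 1 := by linarith
    have hd2 : ((j : ℚ)) < (j' : ℚ) + 2 := by linarith
    have hn1 : j' < j + 1 := by exact_mod_cast hd1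
    have hn2 : j < j' + 2 := by exact_mod_cast hd2
    have : j = j' ∨ j = j' + 1 := by omega
    rcases this with h | h
    · left
      refine ⟨h, ?_⟩
      subst h
      have hx : (0 : ℚ) < (((b : ℕ) : ℚ) - ((a : ℕ) : ℚ)) * ε := by linarith
      by_contra hab
      have : (b : ℕ) ≤ (a : ℕ) := Fin.le_def.mp (Fin.not_lt.mp hab)
      have : ((b : ℕ) : ℚ) ≤ ((a : ℕ) : ℚ) := by exact_mod_cast this
      nlinarith
    · right
      refine ⟨h, ?_⟩
      subst h
      have hx : (((b : ℕ) : ℚ) - ((a : ℕ) : ℚ)) * ε < 0 := by push_cast at h2 ⊢; linarith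
      by_contra hab
      have : (a : ℕ) ≤ (b : ℕ) := Fin.le_def.mp (Fin.not_lt.mp hab)
      have : ((a : ℕ) : ℚ) ≤ ((b : ℕ) : ℚ) := by exact_mod_cast this
      nlinarith
  · rintro (⟨h, hab⟩ | ⟨h, hab⟩)
    · subst h
      have : (a : ℕ) < (b : ℕ) := Fin.lt_def.mp hab
      have hq : ((a : ℕ) : ℚ) + 1 ≤ ((b : ℕ) : ℚ) := by exact_mod_cast this
      constructor
      · simp only [sub_self, zero_add]
        nlinarith
      · simp only [sub_self, zero_add]
        linarith
    · subst h
      have : (b : ℕ) < (a : ℕ) := Fin.lt_def.mp hab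
      have hq : ((b : ℕ) : ℚ) + 1 ≤ ((a : ℕ) : ℚ) := by exact_mod_cast this
      have e1 : ((j' + 1 : ℕ) : ℚ) - (j' : ℚ) = 1 := by push_cast; ring
      rw [e1]
      constructor
      · nlinarith
      · nlinarith

lemma stmt15_condIff (k : ℕ) (a b : Fin k) (j j' : ℕ) (ε : ℚ) (hε0 : 0 < ε)
    (hε1 : ε < 1 / k) (A B : ℚ) (x x' : ℤ)
    (hA : A = -(j : ℚ) + (((a : ℕ) : ℚ) + 1) * ε)
    (hB : B = -(j' : ℚ) + (((b : ℕ) : ℚ) + 1) * ε) :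
    ((A < B ∨ (A = B ∧ x < x')) ∧ 0 < B - A ∧ B - A < 1) ↔
      ((j = j' ∧ a < b) ∨ (j = j' + 1 ∧ b < a)) := by
  subst hA hB
  have e : (-(j' : ℚ) + (((b : ℕ) : ℚ) + 1) * ε) - (-(j : ℚ) + (((a : ℕ) : ℚ) + 1) * ε)
      = ((j : ℚ) - j') + (((b : ℕ) : ℚ) - ((a : ℕ) : ℚ)) * ε := by ring
  rw [e]
  constructor
  · rintro ⟨-, h2, h3⟩
    exact (stmt15_key k a b j j' ε hε0 hε1).mp ⟨h2, h3⟩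
  · intro h
    obtain ⟨h2, h3⟩ := (stmt15_key k a b j j' ε hε0 hε1).mpr h
    exact ⟨Or.inl (by nlinarith), h2, h3⟩

lemma stmt15_cnt1 (m n : ℕ) :
    ∑ j ∈ Icc 1 m, ∑ j' ∈ Icc 1 n, (if j = j' then (1:ℕ) else 0) = min m n := by
  have h : ∀ j : ℕ, ∑ j' ∈ Icc 1 n, (if j = j' then (1:ℕ) else 0)
      = if j ∈ Icc 1 n then 1 else 0 := fun j => Finset.sum_ite_eq (Icc 1 n) j (fun _ => 1)
  simp only [h]
  rw [← Finset.card_filter]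
  have : (Icc 1 m).filter (· ∈ Icc 1 n) = Icc 1 (min m n) := by
    ext j; simp only [mem_filter, mem_Icc]; omega
  rw [this, Nat.card_Icc]; omega

lemma stmt15_cnt2 (m n : ℕ) :
    ∑ j ∈ Icc 1 m, ∑ j' ∈ Icc 1 n, (if j = j' + 1 then (1:ℕ) else 0) = min (m-1) n := by
  rw [Finset.sum_comm]
  have h : ∀ j' : ℕ, ∑ j ∈ Icc 1 m, (if j = j' + 1 then (1:ℕ) else 0)
      = if j' + 1 ∈ Icc 1 m then 1 else 0 := by
    intro j'
    exact Finset.sum_ite_eq' (Icc 1 m) (j'+1) (fun _ => (1:ℕ))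
  simp only [h]
  rw [← Finset.card_filter]
  have : (Icc 1 n).filter (fun j' => j' + 1 ∈ Icc 1 m) = Icc 1 (min (m-1) n) := by
    ext j; simp only [mem_filter, mem_Icc]; omega
  rw [this, Nat.card_Icc]; omega

lemma stmt15_cnt3 (M N : ℕ) :
    ∑ j ∈ Icc 2 M, (if j ≤ N then (1:ℕ) else 0) = min M N - 1 := by
  rw [← Finset.card_filter]
  have : (Icc 2 M).filter (fun j => j ≤ N) = Icc 2 (min M N) := by
    ext j; simp only [mem_filter, mem_Icc]; omega
  rw [this, Nat.card_Icc]; omega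

lemma stmt15_inner {k : ℕ} (a b : Fin k) (m n : ℕ) :
    ∑ j ∈ Icc 1 m, ∑ j' ∈ Icc 1 n,
        (if (j = j' ∧ a < b) ∨ (j = j' + 1 ∧ b < a) then (1:ℕ) else 0)
      = if a < b then min m n else if b < a then min (m-1) n else 0 := by
  rcases lt_trichotomy a b with h|h|h
  · rw [if_pos h]
    rw [← stmt15_cnt1 m n]
    exact Finset.sum_congr rfl fun j _ => Finset.sum_congr rfl fun j' _ =>
      if_congr (by simp [h, asymm h]) rfl rfl
  · subst h
    simp [lt_irrefl]
  · rw [if_neg (asymm h), if_pos h]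
    rw [← stmt15_cnt2 m n]
    exact Finset.sum_congr rfl fun j _ => Finset.sum_congr rfl fun j' _ =>
      if_congr (by simp [h, asymm h]) rfl rfl

lemma stmt15_twoMul {k : ℕ} (γ : Fin k → ℕ) :
    ∑ a : Fin k, ∑ b : Fin k, (if a ≠ b then min (γ a) (γ b) else 0)
      = 2 * ∑ a : Fin k, ∑ b : Fin k, (if a < b then min (γ a) (γ b) else 0) := by
  have hpt : ∀ a b : Fin k, (if a ≠ b then min (γ a) (γ b) else 0)
      = (if a < b then min (γ a) (γ b) else 0) + (if b < a then min (γ a) (γ b) else 0) := by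
    intro a b; rcases lt_trichotomy a b with h|h|h
    · simp [h, h.ne, asymm h]
    · simp [h]
    · simp [h, h.ne', asymm h]
  simp only [hpt]
  simp only [Finset.sum_add_distrib]
  have hswap : ∑ a : Fin k, ∑ b : Fin k, (if b < a then min (γ a) (γ b) else 0)
      = ∑ a : Fin k, ∑ b : Fin k, (if a < b then min (γ a) (γ b) else 0) := by
    rw [Finset.sum_comm]
    exact Finset.sum_congr rfl fun a _ => Finset.sum_congr rfl fun b _ =>
      if_congr Iff.rfl (min_comm _ _) rfl
  rw [hswap]
  omega

lemma stmt15_G1nu {k : ℕ} (ν : Fin k → ℕ) (hν : ∀ i j : Fin k, i ≤ j → ν j ≤ ν i) :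
    ∑ a : Fin k, ∑ b : Fin k, (if a < b then min (ν a) (ν b) else 0)
      = ∑ i : Fin k, (i : ℕ) * ν i := by
  have hpt : ∀ a b : Fin k, (if a < b then min (ν a) (ν b) else 0)
      = (if a < b then ν b else 0) := by
    intro a b
    by_cases h : a < b
    · rw [if_pos h, if_pos h, min_eq_right (hν a b h.le)]
    · rw [if_neg h, if_neg h]
  simp only [hpt]
  rw [Finset.sum_comm]
  refine Finset.sum_congr rfl fun b _ => ?_
  rw [← Finset.sum_filter]
  rw [Finset.sum_const, smul_eq_mul]
  congr 1
  have : univ.filter (fun a : Fin k => a < b) = Finset.Iio b := by ext x; simp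
  rw [this, Fin.card_Iio]

/- ------------------- main theorem ------------------- -/

/-- For a partition `μ` and any rearrangement `β` of `μ*` (where `ν = μ*` is the
weakly decreasing rearrangement of `β`), the number of attacking pairs of the
tuple of ribbons `ν(S)` equals `n(μ*) + Σ_{dominoes (b, south b) ∈ V_β} arm(b)`. -/
theorem stmt15 (k : ℕ) (β : Fin k → ℕ) (hβ : ∀ i, 0 < β i)
    (ν : Fin k → ℕ) (hν : ∀ i j : Fin k, i ≤ j → ν j ≤ ν i)
    (σ : Equiv.Perm (Fin k)) (hσ : ∀ i, β i = ν (σ i))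
    (boxes : Finset (Fin k × ℕ))
    (hboxes : ∀ c, c ∈ boxes ↔ 1 ≤ c.2 ∧ c.2 ≤ β c.1)
    (ε : ℚ) (hε0 : 0 < ε) (hε1 : ε < 1 / k)
    (S : Finset (Fin k × ℕ)) (hS : ∀ v ∈ S, 2 ≤ v.2 ∧ v.2 ≤ β v.1) :
    attackCount k boxes S ε
      = (∑ i : Fin k, (i : ℕ) * ν i) +
        ∑ c ∈ boxes.filter (fun c => 2 ≤ c.2), armCol k β c.1 c.2 := by
  classical
  have hbox : ∀ p : Fin k × ℕ, p ∈ boxes ↔ p.1 ∈ univ ∧ p.2 ∈ Icc 1 (β p.1) := by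
    intro p; rw [hboxes]; simp [Finset.mem_Icc]
  -- Step 1: simplify the attack condition
  have hstep1 : attackCount k boxes S ε
      = ∑ a : Fin k, ∑ b : Fin k, (if a < b then min (β a) (β b)
          else if b < a then min (β a - 1) (β b) else 0) := by
    unfold attackCount
    rw [Finset.filter_congr (q := fun pq : (Fin k × ℕ) × (Fin k × ℕ) =>
        (pq.1.2 = pq.2.2 ∧ pq.1.1 < pq.2.1) ∨ (pq.1.2 = pq.2.2 + 1 ∧ pq.2.1 < pq.1.1))
      (fun pq hpq => by
        rw [Finset.mem_product] at hpq
        have h1 := (hboxes pq.1).mp hpq.1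
        have h2 := (hboxes pq.2).mp hpq.2
        exact stmt15_condIff k pq.1.1 pq.2.1 pq.1.2 pq.2.2 ε hε0 hε1 _ _ _ _
          (stmt15_adjC_eq k S ε pq.1 h1.1) (stmt15_adjC_eq k S ε pq.2 h2.1))]
    rw [Finset.card_filter, Finset.sum_product]
    rw [Finset.sum_finset_product boxes univ (fun a => Icc 1 (β a)) hbox]
    simp only [Finset.sum_finset_product boxes univ (fun a => Icc 1 (β a)) hbox]
    refine Finset.sum_congr rfl fun a _ => ?_
    rw [Finset.sum_comm]
    exact Finset.sum_congr rfl fun b _ => stmt15_inner a b (β a) (β b)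
  rw [hstep1]
  have hbox2 : ∀ c : Fin k × ℕ, c ∈ boxes.filter (fun c => 2 ≤ c.2) ↔
      c.1 ∈ univ ∧ c.2 ∈ Icc 2 (β c.1) := by
    intro c; rw [Finset.mem_filter, hboxes]; simp only [Finset.mem_Icc, Finset.mem_univ,
      true_and]; omega
  have harm : ∑ c ∈ boxes.filter (fun c => 2 ≤ c.2), armCol k β c.1 c.2
      = ∑ a : Fin k, ∑ b : Fin k,
          ((if b < a ∧ β b < β a then min (β a) (β b + 1) - 1 else 0)
            + (if a < b ∧ β b ≤ β a then min (β a) (β b) - 1 else 0)) := by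
    rw [Finset.sum_finset_product (boxes.filter (fun c => 2 ≤ c.2)) univ
      (fun a => Icc 2 (β a)) hbox2]
    refine Finset.sum_congr rfl fun a _ => ?_
    have hA : ∀ j, armCol k β a j = ∑ b : Fin k,
        ((if b < a ∧ j - 1 ≤ β b ∧ β b < β a then 1 else 0)
          + (if a < b ∧ j ≤ β b ∧ β b ≤ β a then 1 else 0)) := by
      intro j
      rw [armCol, Finset.card_filter, Finset.card_filter, ← Finset.sum_add_distrib]
    simp only [hA]
    rw [Finset.sum_comm]
    refine Finset.sum_congr rfl fun b _ => ?_
    rw [Finset.sum_add_distrib]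
    congr 1
    · by_cases hP : b < a ∧ β b < β a
      · rw [if_pos hP, ← stmt15_cnt3 (β a) (β b + 1)]
        refine Finset.sum_congr rfl fun j hj => if_congr ?_ rfl rfl
        constructor
        · rintro ⟨-, h2, -⟩; omega
        · intro h; exact ⟨hP.1, by omega, hP.2⟩
      · rw [if_neg hP]
        exact Finset.sum_eq_zero fun j _ => if_neg (fun ⟨x, y, z⟩ => hP ⟨x, z⟩)
    · by_cases hP : a < b ∧ β b ≤ β a
      · rw [if_pos hP, ← stmt15_cnt3 (β a) (β b)]
        refine Finset.sum_congr rfl fun j hj => if_congr ?_ rfl rfl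
        constructor
        · rintro ⟨-, h2, -⟩; exact h2
        · intro h; exact ⟨hP.1, h, hP.2⟩
      · rw [if_neg hP]
        exact Finset.sum_eq_zero fun j _ => if_neg (fun ⟨x, y, z⟩ => hP ⟨x, z⟩)
  -- split G into G1 + G2
  have hG : ∀ a b : Fin k,
      (if a < b then min (β a) (β b) else if b < a then min (β a - 1) (β b) else 0)
        = (if a < b then min (β a) (β b) else 0)
          + (if b < a then min (β a - 1) (β b) else 0) := by
    intro a b; rcases lt_trichotomy a b with h|h|h
    · simp [h, asymm h]
    · simp [h]
    · simp [h, asymm h]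
  -- H side equals G2
  have hH : ∑ a : Fin k, ∑ b : Fin k,
      ((if b < a ∧ β b < β a then min (β a) (β b + 1) - 1 else 0)
        + (if a < b ∧ β b ≤ β a then min (β a) (β b) - 1 else 0))
      = ∑ a : Fin k, ∑ b : Fin k, (if b < a then min (β a - 1) (β b) else 0) := by
    simp only [Finset.sum_add_distrib]
    have hsw : ∑ a : Fin k, ∑ b : Fin k,
        (if a < b ∧ β b ≤ β a then min (β a) (β b) - 1 else 0)
        = ∑ a : Fin k, ∑ b : Fin k,
          (if b < a ∧ β a ≤ β b then min (β b) (β a) - 1 else 0) := Finset.sum_comm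
    rw [hsw]
    simp only [← Finset.sum_add_distrib]
    refine Finset.sum_congr rfl fun a _ => Finset.sum_congr rfl fun b _ => ?_
    by_cases h : b < a
    · by_cases h2 : β b < β a
      · have h3 : ¬ β a ≤ β b := by omega
        simp [h, h2, h3]; omega
      · have h3 : β a ≤ β b := by omega
        simp [h, h2, h3]; omega
    · simp [h]
  rw [harm, hH]
  simp only [hG, Finset.sum_add_distrib]
  -- G1 part equals n(ν)
  have hMeq : ∑ a : Fin k, ∑ b : Fin k, (if a ≠ b then min (β a) (β b) else 0)
      = ∑ a : Fin k, ∑ b : Fin k, (if a ≠ b then min (ν a) (ν b) else 0) := by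
    calc ∑ a : Fin k, ∑ b : Fin k, (if a ≠ b then min (β a) (β b) else 0)
        = ∑ a : Fin k, ∑ b : Fin k,
            (if σ a ≠ σ b then min (ν (σ a)) (ν (σ b)) else 0) := by
          refine Finset.sum_congr rfl fun a _ => Finset.sum_congr rfl fun b _ => ?_
          rw [← hσ a, ← hσ b]
          exact if_congr (by simp) rfl rfl
      _ = ∑ a : Fin k, ∑ b : Fin k, (if a ≠ b then min (ν a) (ν b) else 0) := by
          refine Eq.trans (Finset.sum_congr rfl fun a _ =>
            Equiv.sum_comp σ (fun b => if σ a ≠ b then min (ν (σ a)) (ν b) else 0)) ?_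
          exact Equiv.sum_comp σ (fun a => ∑ b : Fin k, if a ≠ b then min (ν a) (ν b) else 0)
  have h2β := stmt15_twoMul β
  have h2ν := stmt15_twoMul ν
  have hnν := stmt15_G1nu ν hν
  have hG1 : ∑ a : Fin k, ∑ b : Fin k, (if a < b then min (β a) (β b) else 0)
      = ∑ i : Fin k, (i : ℕ) * ν i := by
    rw [hMeq, h2ν, hnν] at h2β
    omega
  rw [hG1]
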